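/- arXiv:1003.0090 — 9 statements merged into one kernel-verified Lean document; each statement's English description precedes it below -/
import Mathlib

section
/- For real numbers b > 1, p ∈ [0,1], and integer n ≥ 1, the inequality p·(1 - b·p/(b+1))^(n-1) + (1-p)^n ≥ ((1-p) + p^(b+1)/(b+1))^(n-1) holds. -/
/-!
Since `b ≥ 1` and `0 ≤ p ≤ 1`, `p ^ (b + 1) ≤ p ^ 2`, so the base on the right is at most
`1 - p + p ^ 2 / (b + 1) = p * (1 - b * p / (b + 1)) + (1 - p) * (1 - p)`, a convex combination
with weights `p` and `1 - p`. Convexity of `t ↦ t ^ (n - 1)` on `[0, ∞)` finishes the proof.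
-/

open Real

lemma rpow_add_one_le_sq {p b : ℝ} (hp0 : 0 ≤ p) (hp1 : p ≤ 1) (hb : 1 ≤ b) :
    p ^ (b + 1) ≤ p ^ 2 := by
  rw [← rpow_two]
  exact rpow_le_rpow_of_exponent_ge' hp0 hp1 zero_le_two (by linarith)

lemma pow_convex_comb_le {x y t : ℝ} (m : ℕ) (hx : 0 ≤ x) (hy : 0 ≤ y) (ht0 : 0 ≤ t)
    (ht1 : t ≤ 1) : (t * x + (1 - t) * y) ^ m ≤ t * x ^ m + (1 - t) * y ^ m :=
  (convexOn_pow m).2 hx hy ht0 (sub_nonneg.2 ht1) (add_sub_cancel t 1)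

lemma one_sub_add_rpow_div_le_convex_comb {b p : ℝ} (hb : 1 ≤ b) (hp0 : 0 ≤ p) (hp1 : p ≤ 1) :
    1 - p + p ^ (b + 1) / (b + 1) ≤ p * (1 - b * p / (b + 1)) + (1 - p) * (1 - p) := by
  have hb1 : 0 < b + 1 := by linarith
  calc 1 - p + p ^ (b + 1) / (b + 1) ≤ 1 - p + p ^ 2 / (b + 1) := by
        gcongr; exact rpow_add_one_le_sq hp0 hp1 hb
    _ = p * (1 - b * p / (b + 1)) + (1 - p) * (1 - p) := by field_simp; ring

theorem stmt_0_general (b p : ℝ) (hb : 1 < b) (hp0 : 0 ≤ p) (hp1 : p ≤ 1)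
    (n : ℕ) :
    p * (1 - b * p / (b + 1)) ^ (n - 1) + (1 - p) ^ n ≥
      ((1 - p) + p ^ (b + 1) / (b + 1)) ^ (n - 1) := by
  have hx : 0 ≤ 1 - b * p / (b + 1) := by
    rw [sub_nonneg, div_le_one (by linarith)]
    nlinarith
  have hq : 0 ≤ 1 - p := sub_nonneg.2 hp1
  have hbase : 0 ≤ (1 - p) + p ^ (b + 1) / (b + 1) := by
    have := rpow_nonneg hp0 (b + 1)
    positivity
  have htail : (1 - p) * (1 - p) ^ (n - 1) ≤ (1 - p) ^ n := by
    rw [← pow_succ']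
    exact pow_le_pow_of_le_one hq (by linarith) (by omega)
  calc ((1 - p) + p ^ (b + 1) / (b + 1)) ^ (n - 1)
      ≤ (p * (1 - b * p / (b + 1)) + (1 - p) * (1 - p)) ^ (n - 1) :=
        pow_le_pow_left₀ hbase (one_sub_add_rpow_div_le_convex_comb hb.le hp0 hp1) _
    _ ≤ p * (1 - b * p / (b + 1)) ^ (n - 1) + (1 - p) * (1 - p) ^ (n - 1) :=
        pow_convex_comb_le _ hx hq hp0 hp1
    _ ≤ p * (1 - b * p / (b + 1)) ^ (n - 1) + (1 - p) ^ n := by gcongr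

theorem stmt_0 (b p : ℝ) (hb : 1 < b) (hp0 : 0 ≤ p) (hp1 : p ≤ 1)
    (n : ℕ) (hn : 1 ≤ n) :
    p * (1 - b * p / (b + 1)) ^ (n - 1) + (1 - p) ^ n ≥
      ((1 - p) + p ^ (b + 1) / (b + 1)) ^ (n - 1) :=
  stmt_0_general b p hb hp0 hp1 n
end

section
/- Let X₁,…,Xₙ be independent exponentially distributed random variables with rate 1, and let b, c ≥ 0. Then P(X₁ > b·(X₂ + ⋯ + Xₙ) + b·c) = (1/(1+b))^(n-1) · e^(−b·c). -/
/-! Conditioning on `S = X₂ + ⋯ + Xₙ`, which is independent of `X₁`, the exponential tail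
`P(X₁ > t) = e^{-t}` gives `P(X₁ > b S + b c) = e^{-b c} E[e^{-b S}]`. By independence the
Laplace transform of `S` factors into `n - 1` copies of `E[e^{-b X}] = 1 / (1 + b)`. -/

open MeasureTheory ProbabilityTheory Finset

namespace ProbabilityTheory

lemma measurable_exponentialPDF (r : ℝ) : Measurable (exponentialPDF r) :=
  (measurable_exponentialPDFReal r).ennreal_ofReal

lemma expMeasure_eq_withDensity (r : ℝ) : expMeasure r = volume.withDensity (exponentialPDF r) :=
  rfl

lemma expMeasure_Ioi {r t : ℝ} (hr : 0 < r) (ht : 0 ≤ t) :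
    expMeasure r (Set.Ioi t) = ENNReal.ofReal (Real.exp (-(r * t))) := by
  have := isProbabilityMeasure_expMeasure hr
  have hexp : Real.exp (-(r * t)) ≤ 1 := Real.exp_le_one_iff.2 (by nlinarith)
  rw [← Set.compl_Iic, prob_compl_eq_one_sub measurableSet_Iic, ← ofReal_cdf,
    cdf_expMeasure_eq hr, if_pos ht, ← ENNReal.ofReal_one,
    ← ENNReal.ofReal_sub _ (sub_nonneg.2 hexp), sub_sub_cancel]

lemma ae_nonneg_expMeasure (r : ℝ) : ∀ᵐ x ∂expMeasure r, 0 ≤ x := by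
  rw [ae_iff, expMeasure_eq_withDensity]
  simp only [not_le, Set.Iio_def]
  rw [withDensity_apply _ measurableSet_Iio]
  exact lintegral_exponentialPDF_of_nonpos le_rfl

lemma exponentialPDF_mul_exp_neg_mul {r b : ℝ} (hr : 0 ≤ r) (hrb : 0 < r + b) (x : ℝ) :
    exponentialPDF r x * ENNReal.ofReal (Real.exp (-(b * x)))
      = ENNReal.ofReal (r / (r + b)) * exponentialPDF (r + b) x := by
  rcases lt_or_ge x 0 with hx | hx
  · rw [exponentialPDF_of_neg hx, exponentialPDF_of_neg hx, zero_mul, mul_zero]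
  · rw [exponentialPDF_of_nonneg hx, exponentialPDF_of_nonneg hx,
      ← ENNReal.ofReal_mul (by positivity), ← ENNReal.ofReal_mul (by positivity)]
    congr 1
    rw [← mul_assoc, div_mul_cancel₀ r hrb.ne', mul_assoc, ← Real.exp_add]
    ring_nf

lemma lintegral_exp_neg_mul_expMeasure {r b : ℝ} (hr : 0 ≤ r) (hrb : 0 < r + b) :
    ∫⁻ x, ENNReal.ofReal (Real.exp (-(b * x))) ∂expMeasure r
      = ENNReal.ofReal (r / (r + b)) := by
  rw [expMeasure_eq_withDensity,
    lintegral_withDensity_eq_lintegral_mul _ (measurable_exponentialPDF r) (by fun_prop)]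
  simp only [Pi.mul_apply, exponentialPDF_mul_exp_neg_mul hr hrb]
  rw [lintegral_const_mul _ (measurable_exponentialPDF _), lintegral_exponentialPDF_eq_one hrb,
    mul_one]

lemma ae_nonneg_of_map_eq_expMeasure {Ω : Type*} [MeasurableSpace Ω] {μ : Measure Ω}
    {X : Ω → ℝ} {r : ℝ} (hX : AEMeasurable X μ) (hlaw : μ.map X = expMeasure r) :
    ∀ᵐ ω ∂μ, 0 ≤ X ω :=
  ae_of_ae_map hX (hlaw ▸ ae_nonneg_expMeasure r)

lemma measure_lt_of_indepFun_of_map_eq_expMeasure {Ω β : Type*} [MeasurableSpace Ω]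
    [MeasurableSpace β] {μ : Measure Ω} [IsFiniteMeasure μ] {S : Ω → β} {Y : Ω → ℝ}
    {g : β → ℝ} {r : ℝ} (hr : 0 < r) (hS : Measurable S) (hY : Measurable Y)
    (hg : Measurable g) (hind : IndepFun S Y μ) (hlaw : μ.map Y = expMeasure r)
    (hg0 : ∀ᵐ ω ∂μ, 0 ≤ g (S ω)) :
    μ {ω | g (S ω) < Y ω} = ∫⁻ ω, ENNReal.ofReal (Real.exp (-(r * g (S ω)))) ∂μ := by
  have := isProbabilityMeasure_expMeasure hr
  have hE : MeasurableSet {p : β × ℝ | g p.1 < p.2} :=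
    measurableSet_lt (hg.comp measurable_fst) measurable_snd
  have hmap : μ.map (fun ω => (S ω, Y ω)) = (μ.map S).prod (expMeasure r) := by
    rw [← hlaw]
    exact (indepFun_iff_map_prod_eq_prod_map_map hS.aemeasurable hY.aemeasurable).1 hind
  calc μ {ω | g (S ω) < Y ω}
      = μ.map (fun ω => (S ω, Y ω)) {p | g p.1 < p.2} :=
        (Measure.map_apply (hS.prodMk hY) hE).symm
    _ = ∫⁻ ω, expMeasure r (Set.Ioi (g (S ω))) ∂μ := by
        rw [hmap, Measure.prod_apply hE, lintegral_map (measurable_measure_prodMk_left hE) hS]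
        rfl
    _ = ∫⁻ ω, ENNReal.ofReal (Real.exp (-(r * g (S ω)))) ∂μ := by
        refine lintegral_congr_ae ?_
        filter_upwards [hg0] with ω hω using expMeasure_Ioi hr hω

lemma lintegral_exp_neg_mul_sum_of_iIndepFun {Ω ι : Type*} [MeasurableSpace Ω]
    {μ : Measure Ω} {X : ι → Ω → ℝ} (hmeas : ∀ i, Measurable (X i))
    (hind : iIndepFun X μ) (b : ℝ) (s : Finset ι) :
    ∫⁻ ω, ENNReal.ofReal (Real.exp (-(b * ∑ i ∈ s, X i ω))) ∂μ
      = ∏ i ∈ s, ∫⁻ ω, ENNReal.ofReal (Real.exp (-(b * X i ω))) ∂μ := by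
  have hf : Measurable fun x : ℝ => ENNReal.ofReal (Real.exp (-(b * x))) := by fun_prop
  have hexp_sum : ∀ ω, ENNReal.ofReal (Real.exp (-(b * ∑ i ∈ s, X i ω)))
      = ∏ i ∈ s, ENNReal.ofReal (Real.exp (-(b * X i ω))) := fun ω => by
    rw [Finset.mul_sum, ← Finset.sum_neg_distrib, Real.exp_sum,
      ENNReal.ofReal_prod_of_nonneg fun i _ => (Real.exp_pos _).le]
  simp_rw [hexp_sum]
  exact lintegral_prod_eq_prod_lintegral_of_indepFun s _ (hind.comp _ fun _ => hf)
    fun i => hf.comp (hmeas i)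

end ProbabilityTheory

theorem stmt_3 {Ω : Type*} [MeasurableSpace Ω] (μ : Measure Ω) [IsProbabilityMeasure μ]
    (n : ℕ) (hn : 0 < n) (b c : ℝ) (hb : 0 ≤ b) (hc : 0 ≤ c)
    (X : Fin n → Ω → ℝ)
    (hmeas : ∀ i, Measurable (X i))
    (hind : iIndepFun X μ)
    (hlaw : ∀ i, μ.map (X i) = expMeasure 1) :
    μ {ω | X ⟨0, hn⟩ ω >
        b * (∑ i ∈ Finset.univ.erase ⟨0, hn⟩, X i ω) + b * c} =
      ENNReal.ofReal ((1 / (1 + b)) ^ (n - 1) * Real.exp (-(b * c))) := by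
  set s := Finset.univ.erase (⟨0, hn⟩ : Fin n)
  have hS : Measurable fun ω => ∑ i ∈ s, X i ω := Finset.measurable_sum _ fun i _ => hmeas i
  have hSX : IndepFun (fun ω => ∑ i ∈ s, X i ω) (X ⟨0, hn⟩) μ := by
    simpa only [Finset.sum_fn] using
      hind.indepFun_finsetSum_of_notMem hmeas (Finset.notMem_erase (⟨0, hn⟩ : Fin n) univ)
  have hlevel : ∀ᵐ ω ∂μ, 0 ≤ b * (∑ i ∈ s, X i ω) + b * c := by
    filter_upwards [ae_all_iff.2 fun i => ae_nonneg_of_map_eq_expMeasure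
      (hmeas i).aemeasurable (hlaw i)] with ω hω
    have := Finset.sum_nonneg fun i (_ : i ∈ s) => hω i
    positivity
  have hlaplace : ∀ i, ∫⁻ ω, ENNReal.ofReal (Real.exp (-(b * X i ω))) ∂μ
      = ENNReal.ofReal (1 / (1 + b)) := fun i => by
    rw [← lintegral_map (f := fun x => ENNReal.ofReal (Real.exp (-(b * x)))) (by fun_prop)
      (hmeas i), hlaw i]
    exact lintegral_exp_neg_mul_expMeasure zero_le_one (by positivity)
  calc μ {ω | b * (∑ i ∈ s, X i ω) + b * c < X ⟨0, hn⟩ ω}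
      = ∫⁻ ω, ENNReal.ofReal (Real.exp (-(1 * (b * (∑ i ∈ s, X i ω) + b * c)))) ∂μ :=
        measure_lt_of_indepFun_of_map_eq_expMeasure (g := fun x => b * x + b * c) one_pos hS
          (hmeas _) (by fun_prop) hSX (hlaw _) hlevel
    _ = ∫⁻ ω, ENNReal.ofReal (Real.exp (-(b * c))) *
          ENNReal.ofReal (Real.exp (-(b * ∑ i ∈ s, X i ω))) ∂μ := by
        congr! 2 with ω
        rw [← ENNReal.ofReal_mul (Real.exp_nonneg _), ← Real.exp_add]
        ring_nf
    _ = ENNReal.ofReal ((1 / (1 + b)) ^ (n - 1) * Real.exp (-(b * c))) := by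
        rw [lintegral_const_mul _ (by fun_prop),
          lintegral_exp_neg_mul_sum_of_iIndepFun hmeas hind, prod_congr rfl fun i _ => hlaplace i,
          prod_const, card_erase_of_mem (mem_univ _), card_univ, Fintype.card_fin,
          ← ENNReal.ofReal_pow (by positivity), ← ENNReal.ofReal_mul (Real.exp_nonneg _),
          mul_comm]
end

section
/- Define the map Φ: [0,1]^n → ℝ^n by Φ_i(p₁,…,pₙ) = p_i − (1/2)∑_{j≠i} p_i p_j + (1/3)∑_{j<k, j,k≠i} p_i p_j p_k − ⋯ + ((−1)^(n−1)/n)·p_i·∏_{j≠i} p_j. Then Φ is a bijection from the unit n-cube [0,1]^n onto the unit n-simplex {ρ ∈ ℝ^n : ρ_i ≥ 0, ∑_i ρ_i ≤ 1}. -/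
/-!
With `avgProd T p = ∫₀¹ ∏_{j ∈ T} (1 - p_j x) dx`, expanding the product and integrating term by
term gives `Φ_i(p) = p_i · avgProd (univ \ {i}) p`, and the fundamental theorem of calculus gives
`∑ Φ_i(p) = 1 - ∏ (1 - p_i)`, so the cube lands in the simplex.

Injectivity: `avgProd` is antitone in `p`, and `c · avgProd (c • p) < avgProd p` for `0 < c < 1`
(substitute `x ↦ c x`). If `p ≰ q`, let `i₀` maximise `p_i / q_i` and `c = q_{i₀} / p_{i₀} < 1`;
then `c • p ≤ q`, and comparing `Φ_{i₀}(p) = Φ_{i₀}(q)` with these two facts is contradictory.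

Surjectivity: `p ↦ min 1 (ρ_i / avgProd (univ \ {i}) p)` is monotone on the complete lattice
`[0, 1]^n`, so it has a fixed point (Knaster–Tarski), and `∑ ρ_i ≤ 1` rules out the clamp at `1`.
-/

open Finset intervalIntegral

section avgProd

variable {ι : Type*} (T : Finset ι) (p : ι → ℝ)

noncomputable def avgProd : ℝ :=
  ∫ x in (0 : ℝ)..1, ∏ j ∈ T, (1 - p j * x)

theorem continuous_prod_one_sub_mul : Continuous fun x : ℝ => ∏ j ∈ T, (1 - p j * x) := by
  fun_prop

theorem intervalIntegrable_prod_one_sub_mul (a b : ℝ) :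
    IntervalIntegrable (fun x : ℝ => ∏ j ∈ T, (1 - p j * x)) MeasureTheory.volume a b :=
  (continuous_prod_one_sub_mul T p).intervalIntegrable a b

variable {T p}

theorem prod_one_sub_mul_pos (hp : ∀ j ∈ T, p j ≤ 1) {x : ℝ} (hx₀ : 0 ≤ x) (hx₁ : x < 1) :
    0 < ∏ j ∈ T, (1 - p j * x) :=
  prod_pos fun j hj => by nlinarith [hp j hj]

theorem avgProd_pos (hp : ∀ j ∈ T, p j ≤ 1) : 0 < avgProd T p :=
  intervalIntegral_pos_of_pos_on (intervalIntegrable_prod_one_sub_mul T p 0 1)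
    (fun _ hx => prod_one_sub_mul_pos hp hx.1.le hx.2) one_pos

theorem avgProd_anti {q : ι → ℝ} (hpq : ∀ j ∈ T, p j ≤ q j) (hq : ∀ j ∈ T, q j ≤ 1) :
    avgProd T q ≤ avgProd T p :=
  integral_mono_on zero_le_one (intervalIntegrable_prod_one_sub_mul T q 0 1)
    (intervalIntegrable_prod_one_sub_mul T p 0 1) fun x hx =>
      prod_le_prod (fun j hj => by nlinarith [hq j hj, hx.1, hx.2])
        (fun j hj => by nlinarith [hpq j hj, hx.1])

theorem mul_avgProd_smul_lt (hp : ∀ j ∈ T, p j ≤ 1) {c : ℝ} (hc₀ : 0 < c) (hc₁ : c < 1) :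
    c * avgProd T (c • p) < avgProd T p := by
  have hsub : c * avgProd T (c • p) = ∫ x in (0 : ℝ)..c, ∏ j ∈ T, (1 - p j * x) := by
    have := smul_integral_comp_mul_left (fun x => ∏ j ∈ T, (1 - p j * x)) c (a := 0) (b := 1)
    simp only [smul_eq_mul, mul_zero, mul_one] at this
    rw [← this, avgProd]
    simp only [Pi.smul_apply, smul_eq_mul, mul_assoc, mul_left_comm c]
  have htail : 0 < ∫ x in c..1, ∏ j ∈ T, (1 - p j * x) :=
    intervalIntegral_pos_of_pos_on (intervalIntegrable_prod_one_sub_mul T p c 1)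
      (fun _ hx => prod_one_sub_mul_pos hp (hc₀.le.trans hx.1.le) hx.2) hc₁
  rw [hsub, avgProd, ← integral_add_adjacent_intervals
    (intervalIntegrable_prod_one_sub_mul T p 0 c) (intervalIntegrable_prod_one_sub_mul T p c 1)]
  linarith

theorem sum_powerset_eq_avgProd :
    ∑ S ∈ T.powerset, (-1 : ℝ) ^ S.card / (S.card + 1) * ∏ j ∈ S, p j = avgProd T p := by
  have hexpand (x : ℝ) : ∏ j ∈ T, (1 - p j * x) =
      ∑ S ∈ T.powerset, (-1 : ℝ) ^ S.card * (∏ j ∈ S, p j) * x ^ S.card := by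
    simp only [sub_eq_add_neg, prod_one_add]
    refine sum_congr rfl fun S _ => ?_
    rw [show (fun j => -(p j * x)) = fun j => -x * p j by ext; ring, prod_mul_distrib, prod_const,
      neg_pow]
    ring
  simp only [avgProd, hexpand]
  rw [integral_finsetSum fun S _ => by apply Continuous.intervalIntegrable; fun_prop]
  refine sum_congr rfl fun S _ => ?_
  rw [integral_const_mul, integral_pow]
  field_simp
  ring

theorem sum_mul_avgProd_erase [DecidableEq ι] :
    ∑ i ∈ T, p i * avgProd (T.erase i) p = 1 - ∏ i ∈ T, (1 - p i) := by
  have hderiv (x : ℝ) : HasDerivAt (fun y => ∏ j ∈ T, (1 - p j * y))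
      (∑ i ∈ T, (∏ j ∈ T.erase i, (1 - p j * x)) * -p i) x := by
    simpa using HasDerivAt.fun_finsetProd (u := T) (f' := fun i => -p i)
      fun i _ => by simpa using ((hasDerivAt_id x).const_mul (p i)).const_sub 1
  have hftc := integral_eq_sub_of_hasDerivAt (a := 0) (b := 1) (fun x _ => hderiv x)
    (by apply Continuous.intervalIntegrable; fun_prop)
  rw [integral_finsetSum fun i _ => by apply Continuous.intervalIntegrable; fun_prop] at hftc
  simp only [integral_mul_const, mul_one, mul_zero, sub_zero, prod_const_one] at hftc
  simp only [mul_neg, sum_neg_distrib] at hftc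
  rw [sum_congr rfl fun i _ => mul_comm (p i) _]
  unfold avgProd
  linarith

end avgProd

section throughput

variable {ι : Type*} [Fintype ι] [DecidableEq ι]

noncomputable def throughput (p : ι → ℝ) (i : ι) : ℝ :=
  p i * avgProd (univ.erase i) p

theorem sum_throughput (p : ι → ℝ) : ∑ i, throughput p i = 1 - ∏ i, (1 - p i) :=
  sum_mul_avgProd_erase

theorem mapsTo_throughput :
    Set.MapsTo throughput (Set.Icc 0 1) {ρ : ι → ℝ | (∀ i, 0 ≤ ρ i) ∧ ∑ i, ρ i ≤ 1} := by
  rintro p ⟨hp₀, hp₁⟩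
  refine ⟨fun i => mul_nonneg (hp₀ i) (avgProd_pos fun j _ => hp₁ j).le, ?_⟩
  rw [sum_throughput]
  linarith [prod_nonneg (s := univ) fun j _ => sub_nonneg.2 (show p j ≤ 1 from hp₁ j)]

theorem le_of_throughput_eq {p q : ι → ℝ} (hp : p ∈ Set.Icc 0 1) (hq : q ∈ Set.Icc 0 1)
    (h : throughput p = throughput q) : p ≤ q := by
  by_contra hpq
  obtain ⟨i₁, hi₁⟩ : ∃ i, q i < p i := by simpa [Pi.le_def] using hpq
  have hpos (i : ι) (hi : q i < p i) : 0 < q i := by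
    have hA : 0 < avgProd (univ.erase i) q := avgProd_pos fun j _ => hq.2 j
    have : 0 < throughput q i :=
      h ▸ mul_pos ((hq.1 i).trans_lt hi) (avgProd_pos fun j _ => hp.2 j)
    exact (mul_pos_iff_of_pos_right hA).1 this
  obtain ⟨i₀, hi₀, hmax⟩ := (univ.filter fun i => q i < p i).exists_max_image
    (fun i => p i / q i) ⟨i₁, by simpa using hi₁⟩
  rw [mem_filter] at hi₀
  have hq₀ := hpos i₀ hi₀.2
  have hp₀ : 0 < p i₀ := hq₀.trans hi₀.2
  set c := q i₀ / p i₀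
  have hc₀ : 0 < c := div_pos hq₀ hp₀
  have hc₁ : c < 1 := (div_lt_one hp₀).2 hi₀.2
  have hcp (j : ι) : c * p j ≤ q j := by
    by_cases hj : q j < p j
    · have := hmax j (by simpa using hj)
      rw [div_le_div_iff₀ (hpos j hj) hq₀] at this
      rw [div_mul_eq_mul_div, div_le_iff₀ hp₀]
      linarith
    · nlinarith [show 0 ≤ p j from hp.1 j, not_lt.1 hj]
  have hA : c * avgProd (univ.erase i₀) q < avgProd (univ.erase i₀) p :=
    (mul_le_mul_of_nonneg_left (avgProd_anti (fun j _ => hcp j) fun j _ => hq.2 j) hc₀.le).trans_lt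
      (mul_avgProd_smul_lt (fun j _ => hp.2 j) hc₀ hc₁)
  have heq := congr_fun h i₀
  rw [throughput, throughput, (mul_div_cancel₀ (q i₀) hp₀.ne').symm] at heq
  nlinarith

theorem injOn_throughput : Set.InjOn (throughput (ι := ι)) (Set.Icc 0 1) := fun _ hp _ hq h =>
  (le_of_throughput_eq hp hq h).antisymm (le_of_throughput_eq hq hp h.symm)

theorem exists_eq_min_one_div {ρ : ι → ℝ} (hρ : ∀ i, 0 ≤ ρ i) :
    ∃ p ∈ Set.Icc (0 : ι → ℝ) 1, ∀ i, p i = min 1 (ρ i / avgProd (univ.erase i) p) := by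
  let F : (ι → Set.Icc (0 : ℝ) 1) →o (ι → Set.Icc (0 : ℝ) 1) :=
    { toFun := fun u i => Set.projIcc 0 1 zero_le_one (ρ i / avgProd (univ.erase i) fun j => u j)
      monotone' := fun u v huv i => Set.monotone_projIcc _ <|
        div_le_div_of_nonneg_left (hρ i) (avgProd_pos fun j _ => (v j).2.2)
          (avgProd_anti (fun j _ => huv j) fun j _ => (v j).2.2) }
  refine ⟨fun j => F.lfp j, ⟨fun j => (F.lfp j).2.1, fun j => (F.lfp j).2.2⟩, fun i => ?_⟩
  conv_lhs => rw [← F.map_lfp]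
  exact max_eq_right <| le_min zero_le_one <|
    div_nonneg (hρ i) (avgProd_pos fun j _ => (F.lfp j).2.2).le

theorem surjOn_throughput :
    Set.SurjOn throughput (Set.Icc 0 1) {ρ : ι → ℝ | (∀ i, 0 ≤ ρ i) ∧ ∑ i, ρ i ≤ 1} := by
  rintro ρ ⟨hρ₀, hρ₁⟩
  obtain ⟨p, hp, hfix⟩ := exists_eq_min_one_div hρ₀
  have hA (i : ι) : 0 < avgProd (univ.erase i) p := avgProd_pos fun j _ => hp.2 j
  have hle (i : ι) : throughput p i ≤ ρ i := by
    rw [throughput, hfix i]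
    calc min 1 (ρ i / avgProd (univ.erase i) p) * avgProd (univ.erase i) p
        ≤ ρ i / avgProd (univ.erase i) p * avgProd (univ.erase i) p := by
          gcongr; exacts [(hA i).le, min_le_right _ _]
      _ = ρ i := div_mul_cancel₀ _ (hA i).ne'
  -- Were the clamp at `1` active at `i`, then `∏ j, (1 - p j) = 0`, so the throughputs would
  -- sum to `1` while lying below `ρ`, strictly at `i`.
  have hunclamped (i : ι) : ρ i ≤ avgProd (univ.erase i) p := by
    by_contra! hi
    have hpi : p i = 1 := by rw [hfix i]; exact min_eq_left ((one_le_div (hA i)).2 hi.le)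
    have hsum : ∑ j, throughput p j = 1 := by
      rw [sum_throughput, prod_eq_zero (mem_univ i) (by rw [hpi, sub_self]), sub_zero]
    have hlt : throughput p i < ρ i := by rwa [throughput, hpi, one_mul]
    linarith [sum_lt_sum (fun j _ => hle j) ⟨i, mem_univ i, hlt⟩]
  refine ⟨p, hp, funext fun i => ?_⟩
  rw [throughput, hfix i, min_eq_right ((div_le_one (hA i)).2 (hunclamped i)),
    div_mul_cancel₀ _ (hA i).ne']

theorem bijOn_throughput :
    Set.BijOn throughput (Set.Icc 0 1) {ρ : ι → ℝ | (∀ i, 0 ≤ ρ i) ∧ ∑ i, ρ i ≤ 1} :=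
  ⟨mapsTo_throughput, injOn_throughput, surjOn_throughput⟩

end throughput

theorem stmt_7 (n : ℕ) :
    Set.BijOn
      (fun (p : Fin n → ℝ) (i : Fin n) =>
        ∑ S ∈ (Finset.univ.erase i).powerset,
          (-1 : ℝ) ^ S.card / (S.card + 1) * p i * ∏ j ∈ S, p j)
      (Set.univ.pi fun _ => Set.Icc (0 : ℝ) 1)
      {ρ : Fin n → ℝ | (∀ i, 0 ≤ ρ i) ∧ ∑ i, ρ i ≤ 1} := by
  have hΦ : (fun (p : Fin n → ℝ) (i : Fin n) => ∑ S ∈ (univ.erase i).powerset,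
      (-1 : ℝ) ^ S.card / (S.card + 1) * p i * ∏ j ∈ S, p j) = throughput := by
    funext p i
    rw [throughput, ← sum_powerset_eq_avgProd, mul_sum]
    exact sum_congr rfl fun S _ => by ring
  rw [hΦ, Set.pi_univ_Icc]
  exact bijOn_throughput
end

section
/- Fix ρ₁,…,ρₙ > 0 with ∑ρ_i < 1. The function G(t₁,…,tₙ) = ∑_i ρ_i t_i + ∫₀¹ (∏_j(1 − e^{t_j} x) − 1)/x dx is strictly concave on the open negative orthant {t : t_i < 0 for all i}. -/
/-!
Expanding `∏ⱼ (1 - pⱼ x) - 1` over subsets and integrating termwise turns the integral into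
`∑_{S ≠ ∅} (-1)^|S| / |S| · ∏_{i ∈ S} e^{tᵢ}`, a finite sum of exponentials of linear forms. Along a
line `t + u d` its second derivative is therefore `Q = ∑_{S ≠ ∅} (-1)^|S| / |S| · ∏_S p · (∑_S d)²`
with `p = e^t ∈ (0,1)`. Undoing the integration and summing over `S` with the second-moment
identity for `∑_S ∏_S f · (∑_S d)²` gives `Q = ∫₀¹ P (x B² - D)`, where `P = ∏ (1 - pᵢ x)`,
`B = ∑ dᵢ pᵢ / (1 - pᵢ x)` and `D = ∑ dᵢ² pᵢ / (1 - pᵢ x)²`. Since `P' = -P R` and `(x A)' = D` for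
`R = ∑ pᵢ / (1 - pᵢ x)`, `A = ∑ dᵢ² pᵢ / (1 - pᵢ x)`, Cauchy–Schwarz `B² ≤ R A` bounds the integrand
by `-(x P A)'`, so `Q ≤ -P(1) A(1) < 0` for `d ≠ 0`.
-/

open Finset MeasureTheory Real

variable {ι : Type*}

section Moments

variable {K : Type*} [DecidableEq ι] [Field K]

theorem Finset.sum_powerset_prod_mul_sum (s : Finset ι) (f d : ι → K)
    (hf : ∀ i ∈ s, 1 + f i ≠ 0) :
    ∑ S ∈ s.powerset, (∏ j ∈ S, f j) * ∑ i ∈ S, d i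
      = (∏ i ∈ s, (1 + f i)) * ∑ i ∈ s, d i * f i / (1 + f i) := by
  induction s using Finset.induction_on with
  | empty => simp
  | insert a s ha ih =>
    have hfa : 1 + f a ≠ 0 := hf a (mem_insert_self a s)
    have hinsert : ∀ S ∈ s.powerset, (∏ j ∈ insert a S, f j) * ∑ i ∈ insert a S, d i
        = f a * ((∏ j ∈ S, f j) * ∑ i ∈ S, d i) + f a * d a * ∏ j ∈ S, f j := by
      intro S hS
      have haS : a ∉ S := fun h => ha (mem_powerset.mp hS h)
      rw [prod_insert haS, sum_insert haS]
      ring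
    rw [sum_powerset_insert ha, sum_congr rfl hinsert, sum_add_distrib, ← mul_sum, ← mul_sum,
      ih fun i hi => hf i (mem_insert_of_mem hi), ← prod_one_add, prod_insert ha, sum_insert ha]
    field_simp
    ring

theorem Finset.sum_powerset_prod_mul_sum_sq (s : Finset ι) (f d : ι → K)
    (hf : ∀ i ∈ s, 1 + f i ≠ 0) :
    ∑ S ∈ s.powerset, (∏ j ∈ S, f j) * (∑ i ∈ S, d i) ^ 2
      = (∏ i ∈ s, (1 + f i)) *
          ((∑ i ∈ s, d i * f i / (1 + f i)) ^ 2 + ∑ i ∈ s, d i ^ 2 * f i / (1 + f i) ^ 2) := by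
  induction s using Finset.induction_on with
  | empty => simp
  | insert a s ha ih =>
    have hfa : 1 + f a ≠ 0 := hf a (mem_insert_self a s)
    have hfs : ∀ i ∈ s, 1 + f i ≠ 0 := fun i hi => hf i (mem_insert_of_mem hi)
    have hinsert : ∀ S ∈ s.powerset, (∏ j ∈ insert a S, f j) * (∑ i ∈ insert a S, d i) ^ 2
        = f a * ((∏ j ∈ S, f j) * (∑ i ∈ S, d i) ^ 2)
          + 2 * f a * d a * ((∏ j ∈ S, f j) * ∑ i ∈ S, d i)
          + f a * d a ^ 2 * ∏ j ∈ S, f j := by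
      intro S hS
      have haS : a ∉ S := fun h => ha (mem_powerset.mp hS h)
      rw [prod_insert haS, sum_insert haS]
      ring
    rw [sum_powerset_insert ha, sum_congr rfl hinsert, sum_add_distrib, sum_add_distrib,
      ← mul_sum, ← mul_sum, ← mul_sum, ih hfs, sum_powerset_prod_mul_sum s f d hfs,
      ← prod_one_add, prod_insert ha, sum_insert ha, sum_insert ha]
    field_simp
    ring

end Moments

theorem Finset.prod_neg_mul_eq_pow_card_sub_one_mul {R : Type*} [CommRing R] {S : Finset ι}
    (hS : S.Nonempty) (p : ι → R) (x : R) :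
    ∏ j ∈ S, -(p j * x) = (-1) ^ #S * (∏ j ∈ S, p j) * x ^ (#S - 1) * x := by
  rw [prod_congr rfl fun j _ => show -(p j * x) = (-x) * p j by ring, prod_mul_distrib,
    prod_const, neg_pow, mul_assoc _ _ x, ← pow_succ, Nat.sub_add_cancel hS.card_pos]
  ring

theorem integral_sum_mul_pow_card_sub_one {T : Finset (Finset ι)} (hT : ∅ ∉ T)
    (c : Finset ι → ℝ) :
    ∫ x in (0 : ℝ)..1, ∑ S ∈ T, c S * x ^ (#S - 1) = ∑ S ∈ T, c S / #S := by
  rw [intervalIntegral.integral_finsetSum fun S _ =>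
    (continuous_const.fun_mul (continuous_pow _)).intervalIntegrable _ _]
  refine sum_congr rfl fun S hS => ?_
  have hcard : 1 ≤ #S := card_pos.mpr (nonempty_iff_ne_empty.mpr (ne_of_mem_of_not_mem hS hT))
  rw [intervalIntegral.integral_const_mul, integral_pow, Nat.cast_sub hcard]
  simp [div_eq_mul_inv]

theorem setIntegral_prod_one_sub_mul_sub_one_div [Fintype ι] [DecidableEq ι] (p : ι → ℝ) :
    ∫ x in Set.Ioo (0 : ℝ) 1, ((∏ j, (1 - p j * x)) - 1) / x
      = ∑ S ∈ univ.powerset.erase ∅, (-1) ^ #S / #S * ∏ j ∈ S, p j := by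
  have hpoly : ∀ x ∈ Set.Ioc (0 : ℝ) 1, ((∏ j, (1 - p j * x)) - 1) / x
      = ∑ S ∈ univ.powerset.erase ∅, (-1) ^ #S * (∏ j ∈ S, p j) * x ^ (#S - 1) := by
    intro x hx
    rw [div_eq_iff hx.1.ne', sum_mul, prod_congr rfl fun j _ => sub_eq_add_neg 1 (p j * x),
      prod_one_add, ← sum_erase_add _ _ (empty_mem_powerset _), prod_empty, add_sub_cancel_right]
    exact sum_congr rfl fun S hS =>
      prod_neg_mul_eq_pow_card_sub_one_mul (nonempty_of_ne_empty (ne_of_mem_erase hS)) p x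
  rw [← integral_Ioc_eq_integral_Ioo, setIntegral_congr_fun measurableSet_Ioc hpoly,
    ← intervalIntegral.integral_of_le zero_le_one,
    integral_sum_mul_pow_card_sub_one (notMem_erase _ _)]
  exact sum_congr rfl fun S _ => by ring

section Resolvent

variable [Fintype ι]

noncomputable def resolventSum (p w : ι → ℝ) (x : ℝ) : ℝ := ∑ i, w i * p i / (1 - p i * x)

variable {p : ι → ℝ} {x : ℝ}

theorem hasDerivAt_prod_one_sub_mul (h : ∀ i, 1 - p i * x ≠ 0) :
    HasDerivAt (fun x => ∏ i, (1 - p i * x)) (-(∏ i, (1 - p i * x)) * resolventSum p 1 x) x := by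
  classical
  have hfac : ∀ i ∈ univ, HasDerivAt (fun x => 1 - p i * x) (-p i) x := fun i _ => by
    simpa using ((hasDerivAt_id x).const_mul (p i)).const_sub 1
  refine (HasDerivAt.fun_finsetProd hfac).congr_deriv ?_
  rw [resolventSum, mul_sum]
  refine sum_congr rfl fun i _ => ?_
  rw [← mul_prod_erase univ _ (mem_univ i), smul_eq_mul, Pi.one_apply, one_mul, mul_div_assoc',
    eq_div_iff (h i)]
  ring

theorem hasDerivAt_mul_resolventSum (w : ι → ℝ) (h : ∀ i, 1 - p i * x ≠ 0) :
    HasDerivAt (fun x => x * resolventSum p w x) (∑ i, w i * p i / (1 - p i * x) ^ 2) x := by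
  have hterm : ∀ i ∈ univ, HasDerivAt (fun x => w i * p i / (1 - p i * x))
      (w i * p i * p i / (1 - p i * x) ^ 2) x := fun i _ => by
    refine ((hasDerivAt_const x (w i * p i)).fun_div
      (((hasDerivAt_id x).const_mul (p i)).const_sub 1) (h i)).congr_deriv ?_
    simp
  refine ((hasDerivAt_id x).fun_mul (HasDerivAt.fun_sum hterm)).congr_deriv ?_
  rw [one_mul, id, mul_sum, ← sum_add_distrib]
  refine sum_congr rfl fun i _ => ?_
  field_simp [h i]
  ring

theorem resolventSum_sq_le (w : ι → ℝ) (hp : ∀ i, 0 ≤ p i / (1 - p i * x)) :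
    resolventSum p w x ^ 2 ≤ resolventSum p 1 x * resolventSum p (w ^ 2) x := by
  refine sum_sq_le_sum_mul_sum_of_sq_le_mul univ (fun i _ => ?_) (fun i _ => ?_) fun i _ => ?_
  · simpa [mul_div_assoc] using hp i
  · simpa [mul_div_assoc] using mul_nonneg (sq_nonneg (w i)) (hp i)
  · simp only [Pi.one_apply, Pi.pow_apply, mul_div_assoc, one_mul]
    exact le_of_eq (by ring)

theorem sum_powerset_mul_sum_sq_mul_pow_card_sub_one [DecidableEq ι] (d : ι → ℝ) (hx : x ≠ 0)
    (h : ∀ i, 1 - p i * x ≠ 0) :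
    ∑ S ∈ univ.powerset.erase ∅, (-1) ^ #S * (∏ j ∈ S, p j) * (∑ i ∈ S, d i) ^ 2 * x ^ (#S - 1)
      = (∏ i, (1 - p i * x))
          * (x * resolventSum p d x ^ 2 - ∑ i, d i ^ 2 * p i / (1 - p i * x) ^ 2) := by
  refine mul_right_cancel₀ hx ?_
  have hterm : ∀ S ∈ univ.powerset.erase ∅,
      (-1) ^ #S * (∏ j ∈ S, p j) * (∑ i ∈ S, d i) ^ 2 * x ^ (#S - 1) * x
        = (∏ j ∈ S, -(p j * x)) * (∑ i ∈ S, d i) ^ 2 := fun S hS => by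
    rw [prod_neg_mul_eq_pow_card_sub_one_mul (nonempty_of_ne_empty (ne_of_mem_erase hS))]
    ring
  have hlin : ∑ i, d i * -(p i * x) / (1 + -(p i * x)) = -x * resolventSum p d x := by
    rw [resolventSum, mul_sum]
    exact sum_congr rfl fun i _ => by ring
  have hquad : ∑ i, d i ^ 2 * -(p i * x) / (1 + -(p i * x)) ^ 2
      = -x * ∑ i, d i ^ 2 * p i / (1 - p i * x) ^ 2 := by
    rw [mul_sum]
    exact sum_congr rfl fun i _ => by ring
  rw [sum_mul, sum_congr rfl hterm, sum_erase _ (by simp),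
    sum_powerset_prod_mul_sum_sq _ _ _ fun i _ => by simpa [← sub_eq_add_neg] using h i,
    hlin, hquad, prod_congr rfl fun i _ => (sub_eq_add_neg 1 (p i * x)).symm]
  ring

theorem sum_powerset_div_card_mul_sum_sq_neg [DecidableEq ι] (hp0 : ∀ i, 0 < p i)
    (hp1 : ∀ i, p i < 1) {d : ι → ℝ} (hd : d ≠ 0) :
    ∑ S ∈ univ.powerset.erase ∅, (-1) ^ #S / #S * (∏ j ∈ S, p j) * (∑ i ∈ S, d i) ^ 2 < 0 := by
  have hpos : ∀ x ∈ Set.Icc (0 : ℝ) 1, ∀ i, 0 < 1 - p i * x := fun x hx i => by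
    nlinarith [hx.1, hx.2, hp0 i, hp1 i]
  set P : ℝ → ℝ := fun x => ∏ i, (1 - p i * x)
  set φ : ℝ → ℝ := fun x => ∑ S ∈ univ.powerset.erase ∅,
    (-1) ^ #S * (∏ j ∈ S, p j) * (∑ i ∈ S, d i) ^ 2 * x ^ (#S - 1)
  set g : ℝ → ℝ := fun x => -(P x * (x * resolventSum p (d ^ 2) x))
  set g' : ℝ → ℝ := fun x => P x * resolventSum p 1 x * (x * resolventSum p (d ^ 2) x)
    - P x * ∑ i, (d ^ 2) i * p i / (1 - p i * x) ^ 2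
  have hg : ∀ x ∈ Set.Icc (0 : ℝ) 1, HasDerivAt g (g' x) x := fun x hx => by
    have h i := (hpos x hx i).ne'
    exact ((hasDerivAt_prod_one_sub_mul h).mul (hasDerivAt_mul_resolventSum (d ^ 2) h)).neg
      |>.congr_deriv (by ring)
  have hφg : ∀ x ∈ Set.Ioo (0 : ℝ) 1, φ x ≤ g' x := fun x hx => by
    have hx' : x ∈ Set.Icc (0 : ℝ) 1 := Set.Ioo_subset_Icc_self hx
    have hPx : 0 ≤ P x * x := mul_nonneg (prod_pos fun i _ => hpos x hx' i).le hx.1.le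
    have hcs := mul_le_mul_of_nonneg_left
      (resolventSum_sq_le d fun i => div_nonneg (hp0 i).le (hpos x hx' i).le) hPx
    simp only [φ, g', sum_powerset_mul_sum_sq_mul_pow_card_sub_one d hx.1.ne'
      fun i => (hpos x hx' i).ne', Pi.pow_apply]
    linarith
  have hA : 0 < resolventSum p (d ^ 2) 1 := by
    obtain ⟨i₀, hi₀⟩ := Function.ne_iff.mp hd
    have hterm i : 0 ≤ (d ^ 2) i * p i / (1 - p i * 1) :=
      div_nonneg (mul_nonneg (sq_nonneg _) (hp0 i).le) (hpos 1 (by simp) i).le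
    refine sum_pos' (fun i _ => hterm i) ⟨i₀, mem_univ _, (hterm i₀).lt_of_ne' ?_⟩
    exact div_ne_zero (mul_ne_zero (pow_ne_zero 2 hi₀) (hp0 i₀).ne') (hpos 1 (by simp) i₀).ne'
  have hP : 0 < P 1 := prod_pos fun i _ => hpos 1 (by simp) i
  calc ∑ S ∈ univ.powerset.erase ∅, (-1) ^ #S / #S * (∏ j ∈ S, p j) * (∑ i ∈ S, d i) ^ 2
      = ∫ x in (0 : ℝ)..1, φ x := by
        rw [integral_sum_mul_pow_card_sub_one (notMem_erase _ _)]
        exact sum_congr rfl fun S _ => by ring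
    _ ≤ g 1 - g 0 := intervalIntegral.integral_le_sub_of_hasDeriv_right_of_le zero_le_one
        (fun x hx => (hg x hx).continuousAt.continuousWithinAt)
        (fun x hx => (hg x (Set.Ioo_subset_Icc_self hx)).hasDerivWithinAt)
        (by fun_prop : Continuous φ).integrableOn_Icc hφg
    _ = -(P 1 * resolventSum p (d ^ 2) 1) := by simp [g]
    _ < 0 := neg_neg_of_pos (mul_pos hP hA)

end Resolvent

theorem StrictConcaveOn.of_forall_segment {E : Type*} [AddCommGroup E] [Module ℝ E] {s : Set E}
    {f : E → ℝ} (hs : Convex ℝ s)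
    (h : ∀ x ∈ s, ∀ y ∈ s, x ≠ y →
      StrictConcaveOn ℝ (Set.Icc 0 1) fun u : ℝ => f (x + u • (y - x))) :
    StrictConcaveOn ℝ s f := by
  refine ⟨hs, fun x hx y hy hxy a b ha hb hab => ?_⟩
  have := (h x hx y hy hxy).2 (by simp : (0 : ℝ) ∈ Set.Icc 0 1)
    (by simp : (1 : ℝ) ∈ Set.Icc 0 1) zero_ne_one ha hb hab
  obtain rfl := eq_sub_of_add_eq hab
  have hcomb : (1 - b) • x + b • y = x + b • (y - x) := by
    rw [sub_smul, one_smul, smul_sub]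
    abel
  simpa [hcomb] using this

theorem deriv_sum_mul_exp {α : Type*} (T : Finset α) (c a b : α → ℝ) :
    deriv (fun u => ∑ k ∈ T, c k * exp (a k + u * b k))
      = fun u => ∑ k ∈ T, c k * b k * exp (a k + u * b k) := by
  funext u
  refine (HasDerivAt.fun_sum fun k _ => ?_).deriv
  have := (((hasDerivAt_id u).mul_const (b k)).const_add (a k)).exp.const_mul (c k)
  exact this.congr_deriv (by simp only [id, one_mul]; ring)

theorem convex_setOf_forall_neg : Convex ℝ {t : ι → ℝ | ∀ i, t i < 0} := by
  simpa only [Set.ofPred_forall] using convex_iInter fun i =>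
    convex_halfSpace_lt (f := fun t : ι → ℝ => t i) (LinearMap.proj i).isLinear 0

theorem strictConcaveOn_sum_powerset_div_card_mul_prod_exp [Fintype ι] [DecidableEq ι] :
    StrictConcaveOn ℝ {t : ι → ℝ | ∀ i, t i < 0}
      fun t => ∑ S ∈ univ.powerset.erase ∅, (-1) ^ #S / #S * ∏ i ∈ S, exp (t i) := by
  refine .of_forall_segment convex_setOf_forall_neg fun x hx y hy hxy => ?_
  have hline : ∀ u : ℝ, ∀ S : Finset ι, ∏ i ∈ S, exp ((x + u • (y - x)) i)
      = exp (∑ i ∈ S, x i + u * ∑ i ∈ S, (y - x) i) := fun u S => by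
    simp only [← exp_sum, Pi.add_apply, Pi.smul_apply, smul_eq_mul, sum_add_distrib, mul_sum]
  simp only [hline]
  refine strictConcaveOn_of_deriv2_neg (convex_Icc 0 1) (by fun_prop) fun u hu => ?_
  rw [interior_Icc] at hu
  have hmem := convex_setOf_forall_neg.add_smul_sub_mem hx hy (Set.Ioo_subset_Icc_self hu)
  have hneg := sum_powerset_div_card_mul_sum_sq_neg (fun i => exp_pos _)
    (fun i => Real.exp_lt_one_iff.mpr (hmem i)) (sub_ne_zero.mpr hxy.symm)
  simp only [hline] at hneg
  simp only [Function.iterate_succ, Function.iterate_zero, Function.comp_apply, id,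
    deriv_sum_mul_exp]
  exact lt_of_eq_of_lt (sum_congr rfl fun S _ => by ring) hneg

theorem stmt_8_general (n : ℕ) (ρ : Fin n → ℝ) :
    StrictConcaveOn ℝ {t : Fin n → ℝ | ∀ i, t i < 0}
      (fun t : Fin n → ℝ =>
        ∑ i, ρ i * t i +
          ∫ x in Set.Ioo (0 : ℝ) 1, ((∏ j, (1 - Real.exp (t j) * x)) - 1) / x) := by
  have hlinear : ConcaveOn ℝ {t : Fin n → ℝ | ∀ i, t i < 0} fun t => ∑ i, ρ i * t i :=
    ((Fintype.linearCombination ℝ ρ).concaveOn convex_setOf_forall_neg).congr fun t _ => by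
      simp [Fintype.linearCombination_apply, mul_comm]
  simp only [setIntegral_prod_one_sub_mul_sub_one_div]
  exact hlinear.add_strictConcaveOn strictConcaveOn_sum_powerset_div_card_mul_prod_exp

theorem stmt_8 (n : ℕ) (ρ : Fin n → ℝ) (hρ : ∀ i, 0 < ρ i) (hsum : ∑ i, ρ i < 1) :
    StrictConcaveOn ℝ {t : Fin n → ℝ | ∀ i, t i < 0}
      (fun t : Fin n → ℝ =>
        ∑ i, ρ i * t i +
          ∫ x in Set.Ioo (0 : ℝ) 1, ((∏ j, (1 - Real.exp (t j) * x)) - 1) / x) :=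
  stmt_8_general n ρ
end

section
/- Let n ≥ 1, Δ ≥ 0, p ∈ [0,1]. Define ρ(p) = ∑_{k=0}^{n-1} (−1)^k · C(n−1,k) · ((1+Δ)/(k+1+Δ)) · p^{k+1} and ρ'(p) = p(1−p)^{n−1}(1 − p^Δ) + p^Δ·ρ(p). Then ρ'(p) ≤ ρ(p). -/
open Finset Real

/-!
With `q = p ^ Δ ∈ [0, 1]`, `ρ'` is the convex combination `(1 - q) · p (1 - p) ^ (n - 1) + q · ρ`,
so it suffices that `p (1 - p) ^ (n - 1) ≤ ρ`. Now `ρ = p · c · S_{n-1}(c)` with `c = 1 + Δ` and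
`S_m(c) = ∑_j (-1)^j C(m, j) p^j / (j + c)`, and `(1 - p) ^ m ≤ c · S_m(c)` follows by induction on
`m` from the recursion `c · S_{m+1}(c) = (1 - p) ^ (m + 1) + (m + 1) p · S_m(c + 1)`, the last
term being nonnegative by the induction hypothesis at `c + 1`.
-/

theorem one_sub_pow_eq_sum (m : ℕ) (p : ℝ) :
    (1 - p) ^ m = ∑ j ∈ range (m + 1), (-1) ^ j * m.choose j * p ^ j := by
  rw [sub_eq_neg_add, add_pow]
  refine sum_congr rfl fun j _ => ?_
  rw [neg_pow, one_pow]
  ring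

/-- Equals `∫ s in 0..1, s ^ (c - 1) * (1 - p * s) ^ m` for `c > 0`. -/
noncomputable def altBinomSum (m : ℕ) (c p : ℝ) : ℝ :=
  ∑ j ∈ range (m + 1), (-1) ^ j * m.choose j * p ^ j / (j + c)

theorem mul_altBinomSum_succ (m : ℕ) {c : ℝ} (hc : 0 < c) (p : ℝ) :
    c * altBinomSum (m + 1) c p = (1 - p) ^ (m + 1) + (m + 1) * p * altBinomSum m (c + 1) p := by
  have hsplit : ∀ j : ℕ, c * ((-1) ^ j * (m + 1).choose j * p ^ j / (j + c)) =
      (-1) ^ j * (m + 1).choose j * p ^ j - j * ((-1) ^ j * (m + 1).choose j * p ^ j / (j + c)) := by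
    intro j
    have : (j : ℝ) + c ≠ 0 := by positivity
    field_simp
    ring
  rw [altBinomSum, mul_sum, sum_congr rfl fun j _ => hsplit j, sum_sub_distrib,
    ← one_sub_pow_eq_sum, sum_range_succ' _ (m + 1), altBinomSum, mul_sum]
  simp only [CharP.cast_eq_zero, zero_mul, add_zero, sub_eq_add_neg, ← sum_neg_distrib]
  congr 1
  refine sum_congr rfl fun i _ => ?_
  have hchoose : ((m : ℝ) + 1) * m.choose i = (m + 1).choose (i + 1) * ((i : ℝ) + 1) := by
    exact_mod_cast Nat.add_one_mul_choose_eq m i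
  have : (i : ℝ) + 1 + c ≠ 0 := by positivity
  push_cast
  field_simp
  linear_combination -((i + 1 + c) * (-1) ^ i * p ^ (i + 1)) * hchoose

theorem one_sub_pow_le_mul_altBinomSum (m : ℕ) {c p : ℝ} (hc : 0 < c) (hp0 : 0 ≤ p) (hp1 : p ≤ 1) :
    (1 - p) ^ m ≤ c * altBinomSum m c p := by
  induction m generalizing c with
  | zero => simp [altBinomSum, hc.ne']
  | succ m ih =>
    have hS : 0 ≤ altBinomSum m (c + 1) p :=
      nonneg_of_mul_nonneg_right ((pow_nonneg (sub_nonneg.2 hp1) m).trans (ih (by linarith)))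
        (by linarith)
    rw [mul_altBinomSum_succ m hc]
    have : 0 ≤ (m + 1) * p * altBinomSum m (c + 1) p := by positivity
    linarith

theorem sum_eq_mul_altBinomSum (m : ℕ) (Δ p : ℝ) :
    ∑ k ∈ range (m + 1), (-1 : ℝ) ^ k * m.choose k * ((1 + Δ) / (k + 1 + Δ)) * p ^ (k + 1) =
      p * ((1 + Δ) * altBinomSum m (1 + Δ) p) := by
  rw [altBinomSum, mul_sum, mul_sum]
  refine sum_congr rfl fun k _ => ?_
  rw [add_assoc (k : ℝ)]
  ring

theorem stmt_10 (n : ℕ) (hn : 1 ≤ n) (Δ : ℝ) (hΔ : 0 ≤ Δ) (p : ℝ)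
    (hp0 : 0 ≤ p) (hp1 : p ≤ 1) :
    p * (1 - p) ^ (n - 1) * (1 - p ^ Δ) +
        p ^ Δ * ∑ k ∈ Finset.range n,
          (-1 : ℝ) ^ k * (n - 1).choose k * ((1 + Δ) / (k + 1 + Δ)) * p ^ (k + 1) ≤
      ∑ k ∈ Finset.range n,
        (-1 : ℝ) ^ k * (n - 1).choose k * ((1 + Δ) / (k + 1 + Δ)) * p ^ (k + 1) := by
  obtain ⟨m, rfl⟩ : ∃ m, n = m + 1 := ⟨n - 1, by omega⟩
  rw [Nat.add_sub_cancel, sum_eq_mul_altBinomSum]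
  have hρ : p * (1 - p) ^ m ≤ p * ((1 + Δ) * altBinomSum m (1 + Δ) p) :=
    mul_le_mul_of_nonneg_left (one_sub_pow_le_mul_altBinomSum m (by linarith) hp0 hp1) hp0
  have hq1 : p ^ Δ ≤ 1 := rpow_le_one hp0 hp1 hΔ
  linear_combination mul_nonneg (sub_nonneg.2 hq1) (sub_nonneg.2 hρ)
end

section
/- For n ≥ 1, Δ ≥ 0, and p ∈ [0,1], we have p(1−p)^{n−1} ≤ ∑_{k=0}^{n-1} (−1)^k · C(n−1,k) · ((1+Δ)/(k+1+Δ)) · p^{k+1}. -/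
open Finset intervalIntegral

theorem stmt_11 (n : ℕ) (hn : 1 ≤ n) (Δ : ℝ) (hΔ : 0 ≤ Δ) (p : ℝ)
    (hp0 : 0 ≤ p) (hp1 : p ≤ 1) :
    p * (1 - p) ^ (n - 1) ≤
      ∑ k ∈ Finset.range n,
        (-1 : ℝ) ^ k * (n - 1).choose k * ((1 + Δ) / (k + 1 + Δ)) * p ^ (k + 1) := by
  rcases eq_or_lt_of_le hp0 with h0 | hp
  · simp [← h0]
  obtain ⟨m, rfl⟩ : ∃ m, n = m + 1 := ⟨n - 1, by omega⟩
  simp only [Nat.add_sub_cancel]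
  have hcont : Continuous fun x : ℝ => x ^ Δ := Real.continuous_rpow_const hΔ
  -- integral of each term
  have hterm : ∀ k ∈ Finset.range (m + 1),
      (∫ x in (0:ℝ)..p, x ^ Δ * ((-1:ℝ) ^ k * m.choose k * x ^ k))
        = (-1:ℝ) ^ k * m.choose k * (p ^ (Δ + k + 1) / (Δ + k + 1)) := by
    intro k _
    have hk0 : (0:ℝ) ≤ (k:ℝ) := Nat.cast_nonneg k
    have h1 : ∀ x ∈ Set.uIcc (0:ℝ) p, x ^ Δ * ((-1:ℝ) ^ k * m.choose k * x ^ k)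
        = (-1:ℝ) ^ k * m.choose k * x ^ (Δ + k) := by
      intro x hx
      rw [Set.uIcc_of_le hp0] at hx
      rcases eq_or_ne (Δ + (k:ℝ)) 0 with h | h
      · have hkk : (k:ℝ) = 0 := le_antisymm (by linarith) hk0
        have hΔ0 : Δ = 0 := by linarith
        have hk' : k = 0 := by exact_mod_cast hkk
        subst hΔ0 hk'
        simp
      · rw [show Δ + (k:ℝ) = Δ + ((k:ℕ):ℝ) by norm_num,
          Real.rpow_add_natCast' hx.1 (by simpa using h)]
        ring
    rw [intervalIntegral.integral_congr h1, intervalIntegral.integral_const_mul,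
      integral_rpow (Or.inl (by linarith)), Real.zero_rpow (by positivity), sub_zero]
  -- binomial expansion
  have hbin : ∀ x : ℝ, (1 - x) ^ m = ∑ k ∈ Finset.range (m + 1),
      (-1:ℝ) ^ k * m.choose k * x ^ k := by
    intro x
    rw [show (1 - x : ℝ) = -x + 1 by ring, add_pow]
    refine Finset.sum_congr rfl fun k _ => ?_
    rw [neg_pow]
    ring
  -- the integral identity
  have hint : (∫ x in (0:ℝ)..p, x ^ Δ * (1 - x) ^ m)
      = ∑ k ∈ Finset.range (m + 1),
          (-1:ℝ) ^ k * m.choose k * (p ^ (Δ + k + 1) / (Δ + k + 1)) := by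
    have heq : (fun x : ℝ => x ^ Δ * (1 - x) ^ m)
        = fun x : ℝ => ∑ k ∈ Finset.range (m + 1),
            x ^ Δ * ((-1:ℝ) ^ k * m.choose k * x ^ k) := by
      funext x
      rw [hbin, Finset.mul_sum]
    rw [heq, intervalIntegral.integral_finset_sum]
    · exact Finset.sum_congr rfl hterm
    · intro k _
      exact (hcont.mul (continuous_const.mul (continuous_pow k))).intervalIntegrable _ _
  -- monotone lower bound on the integral
  have hmono : (1 - p) ^ m * (p ^ (Δ + 1) / (Δ + 1))
      ≤ ∫ x in (0:ℝ)..p, x ^ Δ * (1 - x) ^ m := by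
    have h1 : (∫ x in (0:ℝ)..p, (1 - p) ^ m * x ^ Δ)
        = (1 - p) ^ m * (p ^ (Δ + 1) / (Δ + 1)) := by
      rw [intervalIntegral.integral_const_mul, integral_rpow (Or.inl (by linarith)),
        Real.zero_rpow (by positivity), sub_zero]
    rw [← h1]
    apply intervalIntegral.integral_mono_on hp.le
    · exact (continuous_const.mul hcont).intervalIntegrable _ _
    · exact (hcont.mul ((continuous_const.sub continuous_id).pow m)).intervalIntegrable _ _
    · intro x hx
      have h2 : (1 - p) ^ m ≤ (1 - x) ^ m :=
        pow_le_pow_left₀ (by linarith) (by linarith [hx.2]) m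
      have h3 : (0:ℝ) ≤ x ^ Δ := Real.rpow_nonneg hx.1 Δ
      rw [mul_comm ((1 - p) ^ m)]
      exact mul_le_mul_of_nonneg_left h2 h3
  -- rewrite RHS
  have hRHS : ∑ k ∈ Finset.range (m + 1),
        (-1:ℝ) ^ k * m.choose k * ((1 + Δ) / (k + 1 + Δ)) * p ^ (k + 1)
      = (1 + Δ) * p ^ (-Δ) * ∑ k ∈ Finset.range (m + 1),
          (-1:ℝ) ^ k * m.choose k * (p ^ (Δ + k + 1) / (Δ + k + 1)) := by
    rw [Finset.mul_sum]
    refine Finset.sum_congr rfl fun k _ => ?_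
    have hpΔ : p ^ (-Δ) * p ^ Δ = 1 := by
      rw [← Real.rpow_add hp]; simp
    have hpk : p ^ (Δ + (k:ℝ) + 1) = p ^ Δ * p ^ (k + 1) := by
      rw [show Δ + (k:ℝ) + 1 = Δ + ((k + 1 : ℕ):ℝ) by push_cast; ring,
        Real.rpow_add hp, Real.rpow_natCast]
    rw [hpk,
      show (1 + Δ) * p ^ (-Δ) * ((-1:ℝ) ^ k * m.choose k * (p ^ Δ * p ^ (k+1) / (Δ + k + 1)))
        = (p ^ (-Δ) * p ^ Δ) * ((-1:ℝ) ^ k * m.choose k * ((1 + Δ) / (Δ + k + 1)) * p ^ (k+1))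
        by ring, hpΔ, one_mul]
    ring
  rw [hRHS, ← hint]
  have h5 : p ^ (-Δ) * p ^ (Δ + 1) = p := by
    rw [← Real.rpow_add hp]
    norm_num
  have hstart : p * (1 - p) ^ m
      = (1 + Δ) * p ^ (-Δ) * ((1 - p) ^ m * (p ^ (Δ + 1) / (Δ + 1))) := by
    have hΔ1 : Δ + 1 ≠ 0 := by positivity
    rw [show (1 + Δ) * p ^ (-Δ) * ((1 - p) ^ m * (p ^ (Δ + 1) / (Δ + 1)))
        = (p ^ (-Δ) * p ^ (Δ + 1)) * (1 - p) ^ m * ((1 + Δ) / (Δ + 1)) by ring,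
      h5, show (1 + Δ) / (Δ + 1) = 1 by rw [add_comm]; exact div_self hΔ1]
    ring
  rw [hstart]
  exact mul_le_mul_of_nonneg_left hmono (by positivity)
end

section
/- For integer n ≥ 2 and real Δ with 0 ≤ Δ ≤ 1/(n−1), the function p ↦ 1 − n·p + (n−1)·p^{1+Δ} is nonincreasing and nonnegative on [0,1]; consequently the derivative of the perfect-CSI homogeneous power-capture throughput, dr/dp = (1−p)^{n−2}·(1 − n·p + (n−1)·p^{1+Δ}), is nonnegative on [0,1]. -/
open Real

/-!
For `p ∈ (0, 1)` we have `p ^ Δ ≤ 1`, so the derivative of `1 - a p + (a - 1) p ^ (1 + Δ)` is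
`-a + (a - 1)(1 + Δ) p ^ Δ ≤ (a - 1) Δ - 1 ≤ 0` when `a = n` and `Δ ≤ 1 / (n - 1)`.
Hence the function decreases on `[0, 1]` to its value `0` at `p = 1`, and so is nonnegative there.
-/

noncomputable def captureMargin (a Δ p : ℝ) : ℝ :=
  1 - a * p + (a - 1) * p ^ (1 + Δ)

section

variable {a Δ : ℝ}

lemma hasDerivAt_captureMargin {x : ℝ} (hx : x ≠ 0) :
    HasDerivAt (captureMargin a Δ) (-a + (a - 1) * ((1 + Δ) * x ^ Δ)) x := by
  have hpow : HasDerivAt (fun p : ℝ => p ^ (1 + Δ)) ((1 + Δ) * x ^ Δ) x := by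
    simpa using Real.hasDerivAt_rpow_const (p := 1 + Δ) (Or.inl hx)
  have h := (((hasDerivAt_id x).const_mul a).const_sub 1).add (hpow.const_mul (a - 1))
  rw [mul_one] at h
  exact h

lemma continuous_captureMargin (hΔ : 0 ≤ Δ) : Continuous (captureMargin a Δ) := by
  unfold captureMargin
  have := Real.continuous_rpow_const (q := 1 + Δ) (by linarith)
  fun_prop

lemma captureMargin_one : captureMargin a Δ 1 = 0 := by
  simp [captureMargin]

lemma antitoneOn_captureMargin (ha : 1 ≤ a) (hΔ : 0 ≤ Δ) (haΔ : (a - 1) * Δ ≤ 1) :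
    AntitoneOn (captureMargin a Δ) (Set.Icc 0 1) := by
  refine antitoneOn_of_hasDerivWithinAt_nonpos (f' := fun x => -a + (a - 1) * ((1 + Δ) * x ^ Δ))
    (convex_Icc 0 1) (continuous_captureMargin hΔ).continuousOn ?_ ?_ <;> rw [interior_Icc]
  · exact fun x hx => (hasDerivAt_captureMargin hx.1.ne').hasDerivWithinAt
  rintro x ⟨hx0, hx1⟩
  have hpow : x ^ Δ ≤ 1 := Real.rpow_le_one hx0.le hx1.le hΔ
  have : (a - 1) * ((1 + Δ) * x ^ Δ) ≤ (a - 1) * (1 + Δ) :=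
    mul_le_mul_of_nonneg_left (mul_le_of_le_one_right (by linarith) hpow) (by linarith)
  linarith

lemma captureMargin_nonneg (ha : 1 ≤ a) (hΔ : 0 ≤ Δ) (haΔ : (a - 1) * Δ ≤ 1) {p : ℝ}
    (hp : p ∈ Set.Icc (0 : ℝ) 1) : 0 ≤ captureMargin a Δ p := by
  simpa [captureMargin_one] using
    antitoneOn_captureMargin ha hΔ haΔ hp (Set.right_mem_Icc.2 zero_le_one) hp.2

end

theorem stmt_12 (n : ℕ) (hn : 2 ≤ n) (Δ : ℝ) (hΔ0 : 0 ≤ Δ) (hΔ1 : Δ ≤ 1 / (n - 1 : ℝ)) :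
    (AntitoneOn (fun p : ℝ => 1 - n * p + (n - 1 : ℝ) * p ^ (1 + Δ)) (Set.Icc 0 1) ∧
      ∀ p ∈ Set.Icc (0 : ℝ) 1, 0 ≤ 1 - n * p + (n - 1 : ℝ) * p ^ (1 + Δ)) ∧
    ∀ p ∈ Set.Icc (0 : ℝ) 1,
      0 ≤ (1 - p) ^ (n - 2) * (1 - n * p + (n - 1 : ℝ) * p ^ (1 + Δ)) := by
  have hn2 : (2 : ℝ) ≤ n := by exact_mod_cast hn
  have hn1 : (1 : ℝ) ≤ n := by linarith
  have hnΔ : ((n : ℝ) - 1) * Δ ≤ 1 := by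
    rwa [le_div_iff₀ (by linarith), mul_comm] at hΔ1
  have hnonneg : ∀ p ∈ Set.Icc (0 : ℝ) 1, 0 ≤ captureMargin n Δ p :=
    fun p => captureMargin_nonneg hn1 hΔ0 hnΔ
  refine ⟨⟨antitoneOn_captureMargin hn1 hΔ0 hnΔ, hnonneg⟩, fun p hp => ?_⟩
  exact mul_nonneg (pow_nonneg (sub_nonneg.2 hp.2) _) (hnonneg p hp)
end

section
/- Let n ≥ 1, Δ ≥ 0, and T > 0 with p = e^{−T}. Then ∫_T^{(1+Δ)T} (1 − e^{−T})^{n−1} e^{−x} dx + ∫_{(1+Δ)T}^∞ (1 − e^{−x/(1+Δ)})^{n−1} e^{−x} dx = p(1−p)^{n−1}(1 − p^Δ) + ∑_{k=0}^{n−1} (−1)^k C(n−1,k) ((1+Δ)/(k+1+Δ)) p^{k+1+Δ}. -/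
/-! Expanding `(1 - e^{-x/c})^m` by the binomial theorem turns the tail integrand into a finite
sum of exponentials `e^{-((k + c)/c) x}`, each of which integrates in closed form. -/

open Finset Real MeasureTheory intervalIntegral

theorem intervalIntegral_exp_neg (a b : ℝ) : ∫ x in a..b, exp (-x) = exp (-a) - exp (-b) := by
  rw [intervalIntegral.integral_comp_neg (fun x => exp x), integral_exp]

theorem one_sub_pow_eq_sum_range {R : Type*} [CommRing R] (y : R) (m : ℕ) :
    (1 - y) ^ m = ∑ k ∈ range (m + 1), (-1) ^ k * m.choose k * y ^ k := by
  rw [sub_eq_neg_add, add_pow]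
  refine sum_congr rfl fun k _ => ?_
  rw [neg_pow]
  ring

theorem one_sub_exp_pow_mul_exp_eq_sum (m : ℕ) {c : ℝ} (hc : c ≠ 0) (x : ℝ) :
    (1 - exp (-(x / c))) ^ m * exp (-x) =
      ∑ k ∈ range (m + 1), (-1) ^ k * m.choose k * exp (-((k + c) / c) * x) := by
  rw [one_sub_pow_eq_sum_range, sum_mul]
  refine sum_congr rfl fun k _ => ?_
  rw [mul_assoc, ← exp_nat_mul, ← exp_add]
  congr 2
  field_simp
  ring

theorem integral_one_sub_exp_pow_mul_exp_Ioi (m : ℕ) {c : ℝ} (hc : 0 < c) (t : ℝ) :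
    ∫ x in Set.Ioi (c * t), (1 - exp (-(x / c))) ^ m * exp (-x) =
      ∑ k ∈ range (m + 1), (-1) ^ k * m.choose k * (c / (k + c)) * exp (-((k + c) * t)) := by
  have hrate : ∀ k : ℕ, -((k + c) / c) < 0 := fun k => by
    have : 0 < (k + c) / c := by positivity
    linarith
  simp_rw [one_sub_exp_pow_mul_exp_eq_sum m hc.ne']
  rw [integral_finsetSum _ fun k _ => (integrableOn_exp_mul_Ioi (hrate k) _).const_mul _]
  refine sum_congr rfl fun k _ => ?_
  rw [MeasureTheory.integral_const_mul, integral_exp_mul_Ioi (hrate k)]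
  have : (k : ℝ) + c ≠ 0 := by positivity
  field_simp

theorem stmt_16_general (n : ℕ) (hn : 1 ≤ n) (Δ : ℝ) (hΔ : 0 ≤ Δ) (T p : ℝ)
    (hp : p = Real.exp (-T)) :
    (∫ x in T..((1 + Δ) * T), (1 - Real.exp (-T)) ^ (n - 1) * Real.exp (-x)) +
        (∫ x in Set.Ioi ((1 + Δ) * T),
          (1 - Real.exp (-(x / (1 + Δ)))) ^ (n - 1) * Real.exp (-x)) =
      p * (1 - p) ^ (n - 1) * (1 - p ^ Δ) +
        ∑ k ∈ Finset.range n,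
          (-1 : ℝ) ^ k * (n - 1).choose k * ((1 + Δ) / (k + 1 + Δ)) * p ^ ((k : ℝ) + 1 + Δ) := by
  obtain ⟨m, rfl⟩ := Nat.exists_eq_add_of_le' hn
  have hp_rpow : ∀ y : ℝ, p ^ y = exp (-(y * T)) := fun y => by
    rw [hp, ← exp_mul]
    ring_nf
  rw [Nat.add_sub_cancel, intervalIntegral.integral_const_mul, intervalIntegral_exp_neg,
    integral_one_sub_exp_pow_mul_exp_Ioi m (by linarith : (0 : ℝ) < 1 + Δ), ← hp]
  congr 1
  · rw [hp_rpow, hp, show -((1 + Δ) * T) = -T + -(Δ * T) by ring, exp_add]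
    ring
  · refine sum_congr rfl fun k _ => ?_
    rw [hp_rpow, add_assoc]

theorem stmt_16 (n : ℕ) (hn : 1 ≤ n) (Δ : ℝ) (hΔ : 0 ≤ Δ) (T p : ℝ) (hT : 0 < T)
    (hp : p = Real.exp (-T)) :
    (∫ x in T..((1 + Δ) * T), (1 - Real.exp (-T)) ^ (n - 1) * Real.exp (-x)) +
        (∫ x in Set.Ioi ((1 + Δ) * T),
          (1 - Real.exp (-(x / (1 + Δ)))) ^ (n - 1) * Real.exp (-x)) =
      p * (1 - p) ^ (n - 1) * (1 - p ^ Δ) +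
        ∑ k ∈ Finset.range n,
          (-1 : ℝ) ^ k * (n - 1).choose k * ((1 + Δ) / (k + 1 + Δ)) * p ^ ((k : ℝ) + 1 + Δ) :=
  stmt_16_general n hn Δ hΔ T p hp
end

section
/- Suppose (p₁,…,pₙ) ∈ [0,1]^n maximizes G(p) = ∑_i ρ_i ln p_i + ∫₀¹ (∏_j(1−p_j x) − 1)/x dx over (0,1]^n, where all ρ_i > 0. Then ∑_i ρ_i ≥ 1 − ∏_i (1 − p_i). In particular, if ∑_i ρ_i < 1, then p_i < 1 for all i at the maximizer. -/
/-!
Along the ray `t ↦ t • p` the integral term becomes, after the substitution `u = t x`,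
`-∫₀ᵗ H`, where `H u = (1 - ∏ⱼ (1 - pⱼ u)) / u`. Maximality of `p` against `t • p` gives
`∫ₜ¹ H ≤ -(∑ ρ) log t`, while `u H u = 1 - ∏ⱼ (1 - pⱼ u)` is increasing, so
`∫ₜ¹ H ≥ (1 - ∏ⱼ (1 - pⱼ t)) · (-log t)`.
Hence `1 - ∏ⱼ (1 - pⱼ t) ≤ ∑ ρ` for every `t < 1`; let `t → 1`.
-/

open Finset MeasureTheory Real Filter Topology

section Slope

variable {ι : Type*} [Fintype ι]

theorem prod_one_sub_mul_antitoneOn {p : ι → ℝ} (hp0 : ∀ i, 0 ≤ p i) (hp1 : ∀ i, p i ≤ 1) :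
    AntitoneOn (fun u => ∏ j, (1 - p j * u)) (Set.Icc 0 1) := by
  intro t ht u hu htu
  refine prod_le_prod (fun j _ => ?_) (fun j _ => ?_)
  · nlinarith [hp0 j, hp1 j, hu.2]
  · nlinarith [hp0 j]

variable [LinearOrder ι]

/-- `(1 - ∏ⱼ (1 - pⱼ u)) / u`, written as a polynomial in `u` so that it is continuous at `0`. -/
def prodSlope (p : ι → ℝ) (u : ℝ) : ℝ :=
  ∑ i, p i * ∏ j with j < i, (1 - p j * u)

theorem prod_one_sub_mul_eq (p : ι → ℝ) (u : ℝ) :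
    ∏ j, (1 - p j * u) = 1 - u * prodSlope p u := by
  rw [prod_one_sub_ordered, prodSlope, mul_sum]
  congr 2 with i
  ring

@[fun_prop]
theorem continuous_prodSlope (p : ι → ℝ) : Continuous (prodSlope p) := by
  unfold prodSlope
  fun_prop

theorem prodSlope_smul (c : ℝ) (p : ι → ℝ) (x : ℝ) :
    prodSlope (c • p) x = c * prodSlope p (c * x) := by
  simp only [prodSlope, Pi.smul_apply, smul_eq_mul, mul_sum, mul_assoc]
  refine sum_congr rfl fun i _ => ?_
  congr 2
  refine prod_congr rfl fun j _ => ?_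
  ring

theorem setIntegral_Ioo_prod_sub_one_div (p : ι → ℝ) :
    ∫ x in Set.Ioo (0 : ℝ) 1, ((∏ j, (1 - p j * x)) - 1) / x =
      -∫ x in (0 : ℝ)..1, prodSlope p x := by
  rw [intervalIntegral.integral_of_le zero_le_one, integral_Ioc_eq_integral_Ioo, ← integral_neg]
  refine setIntegral_congr_fun measurableSet_Ioo fun x hx => ?_
  rw [prod_one_sub_mul_eq]
  field_simp [hx.1.ne']
  ring

theorem integral_prodSlope_smul (c : ℝ) (p : ι → ℝ) :
    ∫ x in (0 : ℝ)..1, prodSlope (c • p) x = ∫ u in (0 : ℝ)..c, prodSlope p u := by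
  simp_rw [prodSlope_smul, intervalIntegral.integral_const_mul]
  simpa only [smul_eq_mul, mul_zero, mul_one] using
    intervalIntegral.smul_integral_comp_mul_left (a := 0) (b := 1) (prodSlope p) c

theorem one_sub_prod_mul_log_le_integral_prodSlope {p : ι → ℝ} (hp0 : ∀ i, 0 ≤ p i)
    (hp1 : ∀ i, p i ≤ 1) {t : ℝ} (ht : t ∈ Set.Ioc (0 : ℝ) 1) :
    (1 - ∏ j, (1 - p j * t)) * -log t ≤ ∫ u in t..1, prodSlope p u := by
  have hmono : ∀ u ∈ Set.Icc t 1, (1 - ∏ j, (1 - p j * t)) * u⁻¹ ≤ prodSlope p u := by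
    intro u hu
    have hu0 : 0 < u := ht.1.trans_le hu.1
    have hprod := prod_one_sub_mul_antitoneOn hp0 hp1 ⟨ht.1.le, ht.2⟩ ⟨hu0.le, hu.2⟩ hu.1
    rw [← div_eq_mul_inv, div_le_iff₀ hu0]
    linarith [prod_one_sub_mul_eq p u]
  have hinv : IntervalIntegrable (fun u : ℝ => u⁻¹) volume t 1 :=
    intervalIntegral.intervalIntegrable_inv
      (fun u hu => (ht.1.trans_le (Set.uIcc_of_le ht.2 ▸ hu).1).ne') continuousOn_id
  calc (1 - ∏ j, (1 - p j * t)) * -log t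
      = ∫ u in t..1, (1 - ∏ j, (1 - p j * t)) * u⁻¹ := by
        rw [intervalIntegral.integral_const_mul, integral_inv_of_pos ht.1 one_pos, one_div, log_inv]
    _ ≤ ∫ u in t..1, prodSlope p u :=
        intervalIntegral.integral_mono_on ht.2 (hinv.const_mul _)
          ((continuous_prodSlope p).intervalIntegrable _ _) hmono

end Slope

theorem sum_mul_log_smul {ι : Type*} (s : Finset ι) (ρ p : ι → ℝ) {t : ℝ} (ht : t ≠ 0)
    (hp : ∀ i ∈ s, p i ≠ 0) :
    ∑ i ∈ s, ρ i * log ((t • p) i) = (∑ i ∈ s, ρ i) * log t + ∑ i ∈ s, ρ i * log (p i) := by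
  rw [sum_mul, ← sum_add_distrib]
  refine sum_congr rfl fun i hi => ?_
  rw [Pi.smul_apply, smul_eq_mul, log_mul ht (hp i hi)]
  ring

theorem stmt_18_general (n : ℕ) (ρ : Fin n → ℝ)
    (p : Fin n → ℝ) (hp : ∀ i, p i ∈ Set.Ioc (0 : ℝ) 1)
    (G : (Fin n → ℝ) → ℝ)
    (hG : ∀ q, G q = ∑ i, ρ i * Real.log (q i) +
      ∫ x in Set.Ioo (0 : ℝ) 1, ((∏ j, (1 - q j * x)) - 1) / x)
    (hmax : ∀ q : Fin n → ℝ, (∀ i, q i ∈ Set.Ioc (0 : ℝ) 1) → G q ≤ G p) :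
    (1 - ∏ i, (1 - p i) ≤ ∑ i, ρ i) ∧
      (∑ i, ρ i < 1 → ∀ i, p i < 1) := by
  have hp0 i : 0 ≤ p i := (hp i).1.le
  have hp1 i : p i ≤ 1 := (hp i).2
  have hbound : ∀ t ∈ Set.Ioo (0 : ℝ) 1, 1 - ∏ i, (1 - p i * t) ≤ ∑ i, ρ i := by
    intro t ht
    have hle := hmax (t • p) fun i =>
      ⟨mul_pos ht.1 (hp i).1, mul_le_one₀ ht.2.le (hp0 i) (hp1 i)⟩
    rw [hG, hG, sum_mul_log_smul _ _ _ ht.1.ne' fun i _ => (hp i).1.ne',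
      setIntegral_Ioo_prod_sub_one_div, setIntegral_Ioo_prod_sub_one_div,
      integral_prodSlope_smul] at hle
    have hsplit := intervalIntegral.integral_interval_sub_left
      ((continuous_prodSlope p).intervalIntegrable (μ := volume) 0 1)
      ((continuous_prodSlope p).intervalIntegrable (μ := volume) 0 t)
    have htail : ∫ u in t..1, prodSlope p u ≤ (∑ i, ρ i) * -log t := by linarith
    exact le_of_mul_le_mul_right
      ((one_sub_prod_mul_log_le_integral_prodSlope hp0 hp1 ⟨ht.1, ht.2.le⟩).trans htail)
      (neg_pos.2 (log_neg ht.1 ht.2))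
  have hcont : Continuous fun t : ℝ => 1 - ∏ i, (1 - p i * t) := by fun_prop
  have hfirst : 1 - ∏ i, (1 - p i) ≤ ∑ i, ρ i := by
    have hlim : Tendsto (fun t : ℝ => 1 - ∏ i, (1 - p i * t)) (𝓝[<] 1)
        (𝓝 (1 - ∏ i, (1 - p i))) := by
      simpa using (hcont.tendsto 1).mono_left nhdsWithin_le_nhds
    exact le_of_tendsto hlim (eventually_of_mem (Ioo_mem_nhdsLT zero_lt_one) hbound)
  refine ⟨hfirst, fun hlt i => (hp1 i).lt_of_ne fun hi => ?_⟩
  have hprod : ∏ j, (1 - p j) = 0 := prod_eq_zero (mem_univ i) (by rw [hi, sub_self])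
  linarith

theorem stmt_18 (n : ℕ) (ρ : Fin n → ℝ) (hρ : ∀ i, 0 < ρ i)
    (p : Fin n → ℝ) (hp : ∀ i, p i ∈ Set.Ioc (0 : ℝ) 1)
    (G : (Fin n → ℝ) → ℝ)
    (hG : ∀ q, G q = ∑ i, ρ i * Real.log (q i) +
      ∫ x in Set.Ioo (0 : ℝ) 1, ((∏ j, (1 - q j * x)) - 1) / x)
    (hmax : ∀ q : Fin n → ℝ, (∀ i, q i ∈ Set.Ioc (0 : ℝ) 1) → G q ≤ G p) :
    (1 - ∏ i, (1 - p i) ≤ ∑ i, ρ i) ∧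
      (∑ i, ρ i < 1 → ∀ i, p i < 1) :=
  stmt_18_general n ρ p hp G hG hmax
end
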